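/- arXiv:1411.1434 — 3 statements merged into one kernel-verified Lean document; each statement's English description precedes it below -/
import Mathlib

section
/- If G(V,E) and G'(V,E') differ in exactly one edge (a,b) ∈ E (Hamming distance 1), then E_{f_G}[x_a x_b] − E_{f_{G'}}[x_a x_b] ≤ tanh(λ), and consequently D(f_G‖f_{G'}) ≤ λ·tanh(λ). -/
open Finset

noncomputable section

/-- spin value ±1 of a Boolean variable. -/
def spin (b : Bool) : ℝ := if b then 1 else -1

/-- the product of spins over an unordered pair of vertices. -/
def edgeTerm {V : Type*} (x : V → Bool) : Sym2 V → ℝ :=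
  Sym2.lift ⟨fun i j => spin (x i) * spin (x j), fun i j => mul_comm _ _⟩

variable {V : Type*} [Fintype V] [DecidableEq V]

/-- Ising energy of configuration `x` for edge set `E`. -/
def energy (E : Finset (Sym2 V)) (x : V → Bool) : ℝ := ∑ e ∈ E, edgeTerm x e

/-- partition function. -/
def partitionFn (E : Finset (Sym2 V)) (lam : ℝ) : ℝ :=
  ∑ x : V → Bool, Real.exp (lam * energy E x)

/-- Ising distribution with uniform edge weight `lam` on edge set `E`. -/
def ising (E : Finset (Sym2 V)) (lam : ℝ) (x : V → Bool) : ℝ :=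
  Real.exp (lam * energy E x) / partitionFn E lam

/-- correlation E[x_a x_b] under the Ising distribution. -/
def corr (E : Finset (Sym2 V)) (lam : ℝ) (a b : V) : ℝ :=
  ∑ x : V → Bool, ising E lam x * (spin (x a) * spin (x b))

/-- P(x_a x_b = +1). -/
def probAgree (E : Finset (Sym2 V)) (lam : ℝ) (a b : V) : ℝ :=
  ∑ x : V → Bool, if x a = x b then ising E lam x else 0

/-- P(x_a x_b = -1). -/
def probDisagree (E : Finset (Sym2 V)) (lam : ℝ) (a b : V) : ℝ :=
  ∑ x : V → Bool, if x a ≠ x b then ising E lam x else 0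

/-- KL divergence between two distributions on configurations. -/
def KL (f g : (V → Bool) → ℝ) : ℝ := ∑ x : V → Bool, f x * Real.log (f x / g x)

/-- two walks between `a` and `b` are internally disjoint if common vertices are endpoints. -/
def InternallyDisjoint {W : Type*} (G : SimpleGraph W) {a b : W} (P Q : G.Walk a b) : Prop :=
  ∀ v ∈ P.support, v ∈ Q.support → v = a ∨ v = b

/-- `a` and `b` are (ℓ,d) connected: d internally vertex-disjoint paths of length ≤ ℓ. -/
def LDConnected {W : Type*} (G : SimpleGraph W) (ℓ d : ℕ) (a b : W) : Prop :=
  ∃ P : Fin d → G.Walk a b,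
    (∀ i, (P i).IsPath ∧ (P i).length ≤ ℓ) ∧
    ∀ i j, i ≠ j → InternallyDisjoint G (P i) (P j)

def emult {V : Type*} [DecidableEq V] (v : V) : Sym2 V → ℕ :=
  Sym2.lift ⟨fun i j => (if v = i then 1 else 0) + (if v = j then 1 else 0),
    fun i j => add_comm _ _⟩

lemma spin_single (x : V → Bool) (i : V) :
    spin (x i) = ∏ v : V, spin (x v) ^ (if v = i then 1 else 0) := by
  have : ∀ v : V, spin (x v) ^ (if v = i then 1 else 0) = if v = i then spin (x v) else 1 := by
    intro v; split <;> simp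
  simp only [this]
  simp

lemma edgeTerm_eq_prod (x : V → Bool) (e : Sym2 V) :
    edgeTerm x e = ∏ v : V, spin (x v) ^ emult v e := by
  induction e using Sym2.inductionOn with
  | hf i j =>
    have h1 : edgeTerm x s(i, j) = spin (x i) * spin (x j) := rfl
    have h2 : ∀ v, emult v s(i, j) = (if v = i then 1 else 0) + (if v = j then 1 else 0) :=
      fun v => rfl
    rw [h1, spin_single x i, spin_single x j]
    simp only [h2, pow_add]
    rw [← Finset.prod_mul_distrib]

lemma charsum_nonneg (S : Finset (Sym2 V)) (a b : V) :
    0 ≤ ∑ x : V → Bool, spin (x a) * spin (x b) * ∏ e ∈ S, edgeTerm x e := by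
  set c : V → ℕ := fun v => (if v = a then 1 else 0) + (if v = b then 1 else 0)
      + ∑ e ∈ S, emult v e with hc
  have key : ∀ x : V → Bool,
      spin (x a) * spin (x b) * ∏ e ∈ S, edgeTerm x e = ∏ v : V, spin (x v) ^ c v := by
    intro x
    have h1 : ∏ e ∈ S, edgeTerm x e = ∏ v : V, spin (x v) ^ ∑ e ∈ S, emult v e := by
      simp only [edgeTerm_eq_prod]
      rw [Finset.prod_comm]
      simp only [Finset.prod_pow_eq_pow_sum]
    rw [h1, spin_single x a, spin_single x b, ← Finset.prod_mul_distrib,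
      ← Finset.prod_mul_distrib]
    refine Finset.prod_congr rfl fun v _ => ?_
    rw [hc]
    ring
  simp only [key]
  have swap : ∑ x : V → Bool, ∏ v : V, spin (x v) ^ c v
      = ∏ v : V, ∑ y : Bool, spin y ^ c v := by
    rw [Finset.prod_univ_sum (fun _ => (univ : Finset Bool)) (fun v y => spin y ^ c v),
      Fintype.piFinset_univ]
  rw [swap]
  refine Finset.prod_nonneg fun v _ => ?_
  have : ∑ y : Bool, spin y ^ c v = (-1 : ℝ) ^ c v + 1 := by
    simp [spin, Fintype.sum_bool]; ring
  rw [this]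
  rcases Nat.even_or_odd (c v) with h | h
  · rw [h.neg_one_pow]; norm_num
  · rw [h.neg_one_pow]; norm_num

omit [Fintype V] [DecidableEq V] in
lemma edgeTerm_pm (x : V → Bool) (e : Sym2 V) : edgeTerm x e = 1 ∨ edgeTerm x e = -1 := by
  induction e using Sym2.inductionOn with
  | hf i j =>
    have h1 : edgeTerm x s(i, j) = spin (x i) * spin (x j) := rfl
    rw [h1]
    cases x i <;> cases x j <;> simp [spin]

lemma tanh_nonneg' {lam : ℝ} (hlam : 0 ≤ lam) : 0 ≤ Real.tanh lam := by
  rw [Real.tanh_eq_sinh_div_cosh]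
  exact div_nonneg (Real.sinh_nonneg_iff.2 hlam) (Real.cosh_pos lam).le

lemma griffiths (E' : Finset (Sym2 V)) (lam : ℝ) (hlam : 0 ≤ lam) (a b : V) :
    0 ≤ ∑ x : V → Bool, Real.exp (lam * energy E' x) * (spin (x a) * spin (x b)) := by
  have hcosh := Real.cosh_pos lam
  have hexp : ∀ x : V → Bool, Real.exp (lam * energy E' x)
      = (Real.cosh lam) ^ E'.card * ∏ e ∈ E', (Real.tanh lam * edgeTerm x e + 1) := by
    intro x
    rw [energy, Finset.mul_sum, Real.exp_sum, ← Finset.prod_const, ← Finset.prod_mul_distrib]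
    refine Finset.prod_congr rfl fun e _ => ?_
    rcases edgeTerm_pm x e with h | h <;>
      rw [h, Real.tanh_eq_sinh_div_cosh] <;> field_simp <;>
      linarith [Real.cosh_add_sinh lam, Real.cosh_sub_sinh lam]
  simp only [hexp]
  have expand : ∀ x : V → Bool,
      (∏ e ∈ E', (Real.tanh lam * edgeTerm x e + 1)) * (spin (x a) * spin (x b))
      = ∑ S ∈ E'.powerset,
        Real.tanh lam ^ S.card * (spin (x a) * spin (x b) * ∏ e ∈ S, edgeTerm x e) := by
    intro x
    rw [Finset.prod_add, Finset.sum_mul]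
    refine Finset.sum_congr rfl fun S hS => ?_
    rw [Finset.prod_mul_distrib, Finset.prod_const, Finset.prod_const_one]
    ring
  calc (0:ℝ) ≤ (Real.cosh lam) ^ E'.card * ∑ x : V → Bool,
        (∏ e ∈ E', (Real.tanh lam * edgeTerm x e + 1)) * (spin (x a) * spin (x b)) := by
        refine mul_nonneg (pow_nonneg hcosh.le _) ?_
        simp only [expand]
        rw [Finset.sum_comm]
        refine Finset.sum_nonneg fun S _ => ?_
        rw [← Finset.mul_sum]
        exact mul_nonneg (pow_nonneg (tanh_nonneg' hlam) _) (charsum_nonneg S a b)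
    _ = _ := by rw [Finset.mul_sum]; exact Finset.sum_congr rfl fun x _ => by ring

lemma tanh_eq' (lam : ℝ) :
    Real.tanh lam = (Real.exp lam - Real.exp (-lam)) / (Real.exp lam + Real.exp (-lam)) := by
  rw [Real.tanh_eq_sinh_div_cosh, Real.sinh_eq, Real.cosh_eq]
  have h : Real.exp lam + Real.exp (-lam) ≠ 0 := by positivity
  field_simp

lemma corr_diff_key (A B lam : ℝ) (hA : 0 < A) (hB : 0 < B) (hBA : B ≤ A) (hlam : 0 < lam) :
    (Real.exp lam * A - Real.exp (-lam) * B) / (Real.exp lam * A + Real.exp (-lam) * B)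
      - (A - B) / (A + B) ≤ Real.tanh lam := by
  rw [tanh_eq']
  set u := Real.exp lam with hu
  set v := Real.exp (-lam) with hv
  have hu1 : 1 < u := by rw [hu]; simpa using Real.exp_lt_exp.2 hlam
  have hv0 : 0 < v := Real.exp_pos _
  have hv1 : v < 1 := by
    rw [hv]; simpa using Real.exp_lt_exp.2 (by linarith : -lam < 0)
  have huv : 0 ≤ u - v := by linarith
  have hd1 : 0 < u * A + v * B := by positivity
  have hd2 : 0 < A + B := by positivity
  have hd3 : 0 < u + v := by positivity
  have hkey : 0 ≤ (u - v) * ((A - B) * (u * A - v * B)) := by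
    have : 0 ≤ u * A - v * B := by nlinarith
    have h2 : 0 ≤ A - B := by linarith
    positivity
  rw [div_sub_div _ _ hd1.ne' hd2.ne', div_le_div_iff₀ (mul_pos hd1 hd2) hd3]
  nlinarith [hkey]

lemma jensen_exp (q lam : ℝ) (hq0 : 0 ≤ q) (hq1 : q ≤ 1) :
    Real.exp ((2 * q - 1) * lam) ≤ q * Real.exp lam + (1 - q) * Real.exp (-lam) := by
  have h := convexOn_exp.2 (Set.mem_univ lam) (Set.mem_univ (-lam)) hq0
    (by linarith : (0:ℝ) ≤ 1 - q) (by ring)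
  simp only [smul_eq_mul] at h
  calc Real.exp ((2 * q - 1) * lam) = Real.exp (q * lam + (1 - q) * (-lam)) := by ring_nf
    _ ≤ q * Real.exp lam + (1 - q) * Real.exp (-lam) := h

omit [Fintype V] [DecidableEq V] in
lemma sgn_eq (x : V → Bool) (a b : V) :
    spin (x a) * spin (x b) = if x a = x b then (1:ℝ) else -1 := by
  cases hxa : x a <;> cases hxb : x b <;> simp [spin, hxa, hxb]

lemma partitionFn_pos (E : Finset (Sym2 V)) (lam : ℝ) : 0 < partitionFn E lam :=
  Finset.sum_pos (fun x _ => Real.exp_pos _) Finset.univ_nonempty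

section main
variable {p : ℕ} (E' : Finset (Sym2 (Fin p))) (lam : ℝ) (a b : Fin p)

def Asum : ℝ := ∑ x : Fin p → Bool, if x a = x b then Real.exp (lam * energy E' x) else 0
def Bsum : ℝ := ∑ x : Fin p → Bool, if x a = x b then 0 else Real.exp (lam * energy E' x)

lemma Asum_add_Bsum : Asum E' lam a b + Bsum E' lam a b = partitionFn E' lam := by
  rw [Asum, Bsum, ← Finset.sum_add_distrib]
  refine Finset.sum_congr rfl fun x _ => ?_
  by_cases h : x a = x b <;> simp [h, partitionFn]

lemma Asum_sub_Bsum :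
    Asum E' lam a b - Bsum E' lam a b
      = ∑ x : Fin p → Bool, Real.exp (lam * energy E' x) * (spin (x a) * spin (x b)) := by
  rw [Asum, Bsum, ← Finset.sum_sub_distrib]
  refine Finset.sum_congr rfl fun x _ => ?_
  rw [sgn_eq]
  by_cases h : x a = x b <;> simp [h]

lemma Asum_pos : 0 < Asum E' lam a b := by
  refine Finset.sum_pos' (fun x _ => by positivity) ⟨fun _ => true, Finset.mem_univ _, ?_⟩
  simp [Real.exp_pos]

lemma Bsum_pos (hab : a ≠ b) : 0 < Bsum E' lam a b := by
  refine Finset.sum_pos' (fun x _ => by positivity)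
    ⟨fun v => decide (v = a), Finset.mem_univ _, ?_⟩
  simp [hab.symm, Real.exp_pos]

lemma corr_E'_eq :
    corr E' lam a b = (Asum E' lam a b - Bsum E' lam a b) / partitionFn E' lam := by
  rw [corr, Asum_sub_Bsum, Finset.sum_div]
  refine Finset.sum_congr rfl fun x _ => ?_
  rw [ising]; ring

lemma energy_insert (hnotin : s(a, b) ∉ E') (x : Fin p → Bool) :
    energy (insert s(a, b) E') x = spin (x a) * spin (x b) + energy E' x := by
  rw [energy, Finset.sum_insert hnotin]; rfl

lemma exp_insert (hnotin : s(a, b) ∉ E') (x : Fin p → Bool) :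
    Real.exp (lam * energy (insert s(a, b) E') x)
      = (if x a = x b then Real.exp lam else Real.exp (-lam))
          * Real.exp (lam * energy E' x) := by
  rw [energy_insert E' a b hnotin, mul_add, Real.exp_add, sgn_eq]
  by_cases hx : x a = x b <;> simp [hx, mul_neg_one]

lemma ZE_eq (hnotin : s(a, b) ∉ E') : partitionFn (insert s(a, b) E') lam
    = Real.exp lam * Asum E' lam a b + Real.exp (-lam) * Bsum E' lam a b := by
  rw [partitionFn, Asum, Bsum, Finset.mul_sum, Finset.mul_sum, ← Finset.sum_add_distrib]
  refine Finset.sum_congr rfl fun x _ => ?_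
  rw [exp_insert E' lam a b hnotin x]
  by_cases hx : x a = x b <;> simp [hx]

lemma numE_eq (hnotin : s(a, b) ∉ E') :
    ∑ x : Fin p → Bool,
        Real.exp (lam * energy (insert s(a, b) E') x) * (spin (x a) * spin (x b))
      = Real.exp lam * Asum E' lam a b - Real.exp (-lam) * Bsum E' lam a b := by
  rw [Asum, Bsum, Finset.mul_sum, Finset.mul_sum, ← Finset.sum_sub_distrib]
  refine Finset.sum_congr rfl fun x _ => ?_
  rw [exp_insert E' lam a b hnotin x, sgn_eq]
  by_cases hx : x a = x b <;> simp [hx]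

lemma corr_E_eq (hnotin : s(a, b) ∉ E') : corr (insert s(a, b) E') lam a b
    = (Real.exp lam * Asum E' lam a b - Real.exp (-lam) * Bsum E' lam a b)
      / (Real.exp lam * Asum E' lam a b + Real.exp (-lam) * Bsum E' lam a b) := by
  rw [corr, ← numE_eq E' lam a b hnotin, ← ZE_eq E' lam a b hnotin, Finset.sum_div]
  refine Finset.sum_congr rfl fun x _ => ?_
  rw [ising]; ring

lemma ising_sum_one (E : Finset (Sym2 (Fin p))) : ∑ x : Fin p → Bool, ising E lam x = 1 := by
  simp only [ising]
  rw [← Finset.sum_div]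
  exact div_self (partitionFn_pos E lam).ne'

lemma KL_eq (hnotin : s(a, b) ∉ E') :
    KL (ising (insert s(a, b) E') lam) (ising E' lam)
      = lam * corr (insert s(a, b) E') lam a b
        + (Real.log (partitionFn E' lam) - Real.log (partitionFn (insert s(a, b) E') lam)) := by
  set Z := partitionFn (insert s(a, b) E') lam with hZ
  set Z' := partitionFn E' lam with hZ'
  have hZpos := partitionFn_pos (insert s(a, b) E') lam
  have hZ'pos := partitionFn_pos E' lam
  have klog : ∀ x : Fin p → Bool,
      Real.log (ising (insert s(a, b) E') lam x / ising E' lam x)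
        = lam * (spin (x a) * spin (x b)) + (Real.log Z' - Real.log Z) := by
    intro x
    rw [ising, ising]
    rw [Real.log_div (by positivity) (by positivity),
      Real.log_div (Real.exp_pos _).ne' hZpos.ne',
      Real.log_div (Real.exp_pos _).ne' hZ'pos.ne',
      Real.log_exp, Real.log_exp, energy_insert E' a b hnotin x]
    ring
  rw [KL]
  simp only [klog]
  have : ∀ x : Fin p → Bool,
      ising (insert s(a, b) E') lam x
          * (lam * (spin (x a) * spin (x b)) + (Real.log Z' - Real.log Z))
        = lam * (ising (insert s(a, b) E') lam x * (spin (x a) * spin (x b)))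
          + (Real.log Z' - Real.log Z) * ising (insert s(a, b) E') lam x := by
    intro x; ring
  simp only [this]
  rw [Finset.sum_add_distrib, ← Finset.mul_sum, ← Finset.mul_sum, ← corr,
    ising_sum_one, mul_one]
end main

/-- For graphs differing in exactly one edge (a,b), the correlation difference across the
two ferromagnetic Ising models is at most tanh(λ), and D(f_G‖f_{G'}) ≤ λ·tanh(λ). -/
theorem stmt_8 {p : ℕ} (E E' : Finset (Sym2 (Fin p))) (a b : Fin p) (hab : a ≠ b)
    (lam : ℝ) (hlam : 0 < lam)
    (hnotin : s(a, b) ∉ E') (hE : E = insert s(a, b) E') :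
    corr E lam a b - corr E' lam a b ≤ Real.tanh lam ∧
    KL (ising E lam) (ising E' lam) ≤ lam * Real.tanh lam := by
  subst hE
  have hA := Asum_pos E' lam a b
  have hB := Bsum_pos E' lam a b hab
  have hBA : Bsum E' lam a b ≤ Asum E' lam a b := by
    have h := griffiths E' lam hlam.le a b
    rw [← Asum_sub_Bsum] at h
    linarith
  have hcorrE := corr_E_eq E' lam a b hnotin
  have hcorrE' : corr E' lam a b = (Asum E' lam a b - Bsum E' lam a b)
      / (Asum E' lam a b + Bsum E' lam a b) := by
    rw [corr_E'_eq, ← Asum_add_Bsum]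
  have h1 : corr (insert s(a, b) E') lam a b - corr E' lam a b ≤ Real.tanh lam := by
    rw [hcorrE, hcorrE']
    exact corr_diff_key _ _ lam hA hB hBA hlam
  refine ⟨h1, ?_⟩
  have hZpos := partitionFn_pos (insert s(a, b) E') lam
  have hZ'pos := partitionFn_pos E' lam
  have hKL := KL_eq E' lam a b hnotin
  have h2 : lam * corr E' lam a b
      ≤ Real.log (partitionFn (insert s(a, b) E') lam) - Real.log (partitionFn E' lam) := by
    rw [← Real.log_div hZpos.ne' hZ'pos.ne',
      Real.le_log_iff_exp_le (div_pos hZpos hZ'pos)]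
    have hq0 : 0 ≤ Asum E' lam a b / (Asum E' lam a b + Bsum E' lam a b) := by positivity
    have hq1 : Asum E' lam a b / (Asum E' lam a b + Bsum E' lam a b) ≤ 1 := by
      rw [div_le_one (by linarith)]
      linarith
    have hj := jensen_exp _ lam hq0 hq1
    have e1 : (2 * (Asum E' lam a b / (Asum E' lam a b + Bsum E' lam a b)) - 1) * lam
        = lam * corr E' lam a b := by
      rw [hcorrE']
      have hne : Asum E' lam a b + Bsum E' lam a b ≠ 0 := by positivity
      field_simp
      ring
    have e2 : (Asum E' lam a b / (Asum E' lam a b + Bsum E' lam a b)) * Real.exp lam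
        + (1 - Asum E' lam a b / (Asum E' lam a b + Bsum E' lam a b)) * Real.exp (-lam)
        = partitionFn (insert s(a, b) E') lam / partitionFn E' lam := by
      rw [ZE_eq E' lam a b hnotin, ← Asum_add_Bsum E' lam a b]
      have hne : Asum E' lam a b + Bsum E' lam a b ≠ 0 := by positivity
      field_simp
      ring
    rw [← e1, ← e2]
    exact hj
  rw [hKL]
  have h3 : lam * (corr (insert s(a, b) E') lam a b - corr E' lam a b)
      ≤ lam * Real.tanh lam := mul_le_mul_of_nonneg_left h1 hlam.le
  linarith
end
end

section
/- For any estimator of a graph drawn uniformly from a finite class 𝒢 from n i.i.d. samples each in {−1,+1}^p, the maximum probability of error satisfies p_max ≥ 1 − (np + log 2)/log|𝒢|. Consequently, if n ≤ (log|𝒢|/p)((1−δ) − log 2/log|𝒢|), then p_max ≥ δ. -/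
open Finset

/-- Monotonicity of `x * exp (-x)` on `[1, ∞)`, in product form. -/
lemma aux_mono (a b : ℝ) (ha : 1 ≤ a) (hab : a ≤ b) :
    b * Real.exp a ≤ a * Real.exp b := by
  have h1 : b ≤ a * (1 + (b - a)) := by nlinarith
  have h2 : 1 + (b - a) ≤ Real.exp (b - a) := by
    have := Real.add_one_le_exp (b - a); linarith
  have hea : (0:ℝ) < Real.exp a := Real.exp_pos a
  calc b * Real.exp a ≤ (a * (1 + (b - a))) * Real.exp a := by nlinarith
    _ ≤ (a * Real.exp (b - a)) * Real.exp a :=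
          mul_le_mul_of_nonneg_right (mul_le_mul_of_nonneg_left h2 (by linarith)) hea.le
    _ = a * Real.exp b := by rw [mul_assoc, ← Real.exp_add]; ring_nf

/-- Key analytic inequality: if `L > t + log 2` then `2^t * L ≤ exp L * (t + log 2)`. -/
lemma aux_key (t : ℕ) (L : ℝ) (h : (t : ℝ) + Real.log 2 < L) :
    (2:ℝ) ^ t * L ≤ Real.exp L * ((t : ℝ) + Real.log 2) := by
  have hlog2 : (0.6931471803 : ℝ) < Real.log 2 := Real.log_two_gt_d9
  cases t with
  | zero =>
    simp only [Nat.cast_zero, pow_zero, one_mul, zero_add] at *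
    -- L ≤ exp L * log 2 ; use L ≤ exp (L - 1) and exp (-1) ≤ log 2
    have h1 : L ≤ Real.exp (L - 1) := by
      have := Real.add_one_le_exp (L - 1); linarith
    have h2 : Real.exp (L - 1) = Real.exp L * Real.exp (-1) := by
      rw [← Real.exp_add]; ring_nf
    have h3 : Real.exp (-1) ≤ Real.log 2 := by
      have he : (2:ℝ) ≤ Real.exp 1 := by
        have := Real.add_one_le_exp (1:ℝ); linarith
      have : Real.exp (-1) ≤ 1/2 := by
        rw [Real.exp_neg]
        rw [inv_le_comm₀ (Real.exp_pos 1) (by norm_num)]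
        linarith
      linarith
    have hL : 0 < Real.exp L := Real.exp_pos L
    calc L ≤ Real.exp L * Real.exp (-1) := by rw [← h2]; exact h1
      _ ≤ Real.exp L * Real.log 2 := by nlinarith
  | succ k =>
    set t' : ℝ := ((k : ℝ) + 1) with ht'
    have hcast : ((k.succ : ℕ) : ℝ) = t' := by push_cast; ring
    rw [hcast] at h ⊢
    have ht1 : (1:ℝ) ≤ t' + Real.log 2 := by
      have : (0:ℝ) ≤ (k:ℝ) := Nat.cast_nonneg k
      simp only [ht']; linarith
    have hmono := aux_mono (t' + Real.log 2) L ht1 h.le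
    -- 2^(k+1) ≤ exp (t' + log 2)
    have hpow : (2:ℝ) ^ (k + 1) ≤ Real.exp (t' + Real.log 2) := by
      rw [Real.exp_add, Real.exp_log (by norm_num : (0:ℝ) < 2)]
      have h2e : (2:ℝ) ≤ Real.exp 1 := by
        have := Real.add_one_le_exp (1:ℝ); linarith
      have : (2:ℝ) ^ (k + 1) ≤ Real.exp 1 ^ (k + 1) :=
        pow_le_pow_left₀ (by norm_num) h2e _
      calc (2:ℝ) ^ (k+1) ≤ Real.exp 1 ^ (k+1) := this
        _ = Real.exp t' := by rw [← Real.exp_nat_mul]; norm_num [ht']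
        _ ≤ Real.exp t' * 2 := by nlinarith [Real.exp_pos t']
    have hL0 : 0 ≤ L := by
      have : (0:ℝ) ≤ t' := by simp [ht']; positivity
      linarith
    calc (2:ℝ) ^ (k + 1) * L ≤ Real.exp (t' + Real.log 2) * L := by
          exact mul_le_mul_of_nonneg_right hpow hL0
      _ = L * Real.exp (t' + Real.log 2) := by ring
      _ ≤ (t' + Real.log 2) * Real.exp L := hmono
      _ = Real.exp L * (t' + Real.log 2) := by ring

/-- Fano-type bound: for a uniformly drawn graph from a finite class 𝒢 and any estimator
from n i.i.d. samples in {−1,+1}^p, p_max ≥ 1 − (np + log 2)/log|𝒢|; hence if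
n ≤ (log|𝒢|/p)((1−δ) − log 2/log|𝒢|) then p_max ≥ δ. -/
theorem stmt_9 (p n : ℕ) (hp : 0 < p) {𝒢 : Type*} [Fintype 𝒢] [DecidableEq 𝒢] [Nonempty 𝒢]
    (hG : 1 < Fintype.card 𝒢)
    (f : 𝒢 → (Fin p → Bool) → ℝ)
    (hf0 : ∀ G x, 0 ≤ f G x) (hf1 : ∀ G, ∑ x : Fin p → Bool, f G x = 1)
    (φ : (Fin n → Fin p → Bool) → 𝒢) (δ : ℝ) (pmax : ℝ)
    (hpmax : pmax = Finset.univ.sup' Finset.univ_nonempty (fun G =>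
        ∑ xs : Fin n → Fin p → Bool, if φ xs ≠ G then ∏ i, f G (xs i) else 0)) :
    1 - ((n * p : ℝ) + Real.log 2) / Real.log (Fintype.card 𝒢) ≤ pmax ∧
    ((n : ℝ) ≤ (Real.log (Fintype.card 𝒢) / p) *
        ((1 - δ) - Real.log 2 / Real.log (Fintype.card 𝒢)) → δ ≤ pmax) := by
  classical
  set M : ℕ := Fintype.card 𝒢 with hM
  set L : ℝ := Real.log M with hLdef
  have hM1 : (1:ℝ) < M := by exact_mod_cast hG
  have hM0 : (0:ℝ) < M := by linarith
  have hL : 0 < L := Real.log_pos hM1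
  -- error probability function
  set g : 𝒢 → ℝ := fun G =>
    ∑ xs : Fin n → Fin p → Bool, if φ xs ≠ G then ∏ i, f G (xs i) else 0 with hg
  -- each sample product is in [0,1]
  have hf_le1 : ∀ G x, f G x ≤ 1 := by
    intro G x
    rw [← hf1 G]
    exact Finset.single_le_sum (fun y _ => hf0 G y) (Finset.mem_univ x)
  have hprod_nonneg : ∀ G (xs : Fin n → Fin p → Bool), 0 ≤ ∏ i, f G (xs i) :=
    fun G xs => Finset.prod_nonneg fun i _ => hf0 G (xs i)
  have hprod_le1 : ∀ G (xs : Fin n → Fin p → Bool), ∏ i, f G (xs i) ≤ 1 :=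
    fun G xs => Finset.prod_le_one (fun i _ => hf0 G (xs i)) (fun i _ => hf_le1 G (xs i))
  -- total sum over all sample sequences is 1
  have htot : ∀ G, (∑ xs : Fin n → Fin p → Bool, ∏ i, f G (xs i)) = 1 := by
    intro G
    rw [← Fintype.sum_pow (f G) n, hf1 G, one_pow]
  -- g G = 1 - success probability
  have hg_eq : ∀ G, g G = 1 - ∑ xs : Fin n → Fin p → Bool,
      if φ xs = G then ∏ i, f G (xs i) else 0 := by
    intro G
    have : g G + (∑ xs : Fin n → Fin p → Bool,
        if φ xs = G then ∏ i, f G (xs i) else 0) = 1 := by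
      rw [hg, ← Finset.sum_add_distrib]
      rw [← htot G]
      apply Finset.sum_congr rfl
      intro xs _
      by_cases hxs : φ xs = G <;> simp [hxs]
    linarith
  -- g is nonneg, so pmax ≥ 0
  have hg_nonneg : ∀ G, 0 ≤ g G := by
    intro G
    apply Finset.sum_nonneg
    intro xs _
    by_cases hxs : φ xs ≠ G <;> simp [hxs, hprod_nonneg G xs]
  have hpmax_ge : ∀ G, g G ≤ pmax := by
    intro G
    rw [hpmax]
    exact Finset.le_sup' _ (Finset.mem_univ G)
  have hpmax0 : 0 ≤ pmax :=
    le_trans (hg_nonneg (Classical.arbitrary 𝒢)) (hpmax_ge _)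
  -- total success over all G is at most the number of sample sequences
  set N : ℕ := 2 ^ (n * p) with hN
  have hcard : Fintype.card (Fin n → Fin p → Bool) = N := by
    simp [hN, Fintype.card_fun, Fintype.card_fin, ← pow_mul, mul_comm p n]
  have hsucc_le : (∑ G : 𝒢, ∑ xs : Fin n → Fin p → Bool,
      if φ xs = G then ∏ i, f G (xs i) else 0) ≤ (N : ℝ) := by
    rw [Finset.sum_comm]
    have : ∀ xs : Fin n → Fin p → Bool,
        (∑ G : 𝒢, if φ xs = G then ∏ i, f G (xs i) else 0) = ∏ i, f (φ xs) (xs i) := by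
      intro xs
      rw [Finset.sum_ite_eq]
      simp
    rw [Finset.sum_congr rfl (fun xs _ => this xs)]
    calc (∑ xs : Fin n → Fin p → Bool, ∏ i, f (φ xs) (xs i))
        ≤ ∑ _xs : Fin n → Fin p → Bool, (1:ℝ) :=
          Finset.sum_le_sum fun xs _ => hprod_le1 (φ xs) xs
      _ = (N : ℝ) := by simp [Finset.card_univ, hcard]
  -- counting bound: M * pmax ≥ M - N
  have hcount : (M : ℝ) - (N : ℝ) ≤ (M : ℝ) * pmax := by
    have h1 : (∑ G : 𝒢, g G) ≤ (M : ℝ) * pmax := by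
      calc (∑ G : 𝒢, g G) ≤ ∑ _G : 𝒢, pmax :=
            Finset.sum_le_sum fun G _ => hpmax_ge G
        _ = (M : ℝ) * pmax := by simp [Finset.card_univ, hM, mul_comm]
    have h2 : (M : ℝ) - (N : ℝ) ≤ ∑ G : 𝒢, g G := by
      have : (∑ G : 𝒢, g G) = (M : ℝ) - ∑ G : 𝒢, ∑ xs : Fin n → Fin p → Bool,
          if φ xs = G then ∏ i, f G (xs i) else 0 := by
        rw [Finset.sum_congr rfl (fun G _ => hg_eq G), Finset.sum_sub_distrib]
        simp [Finset.card_univ, hM]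
      rw [this]
      linarith [hsucc_le]
    linarith
  -- main bound
  have main : 1 - ((n * p : ℝ) + Real.log 2) / L ≤ pmax := by
    by_cases hcase : L ≤ (n * p : ℝ) + Real.log 2
    · have h1 : (1:ℝ) ≤ ((n * p : ℝ) + Real.log 2) / L := (one_le_div hL).mpr hcase
      linarith
    · push_neg at hcase
      have hkey := aux_key (n * p) L (by push_cast; linarith)
      rw [Real.exp_log hM0] at hkey
      push_cast at hkey
      have hNR : (N : ℝ) = (2:ℝ) ^ (n * p) := by simp [hN]
      -- from 2^(np) * L ≤ M * (np + log 2), get N / M ≤ (np + log2)/L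
      have hdiv : (N : ℝ) / (M : ℝ) ≤ ((n * p : ℝ) + Real.log 2) / L := by
        rw [div_le_div_iff₀ hM0 hL, hNR]
        push_cast
        linarith
      have hfrac : 1 - (N : ℝ) / (M : ℝ) ≤ pmax := by
        rw [sub_le_iff_le_add, ← sub_le_iff_le_add', le_div_iff₀ hM0]
        nlinarith [hcount]
      linarith
  refine ⟨main, fun hn => ?_⟩
  -- second part
  have hp' : (0:ℝ) < p := by exact_mod_cast hp
  have h1 : (n : ℝ) * p ≤ (L * ((1 - δ) - Real.log 2 / L)) := by
    have := mul_le_mul_of_nonneg_right hn hp'.le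
    calc (n:ℝ) * p ≤ (L / p * ((1 - δ) - Real.log 2 / L)) * p := this
      _ = L * ((1 - δ) - Real.log 2 / L) := by field_simp
  have h2 : ((n * p : ℝ) + Real.log 2) / L ≤ 1 - δ := by
    rw [div_le_iff₀ hL]
    have hLlog : L * (Real.log 2 / L) = Real.log 2 := by field_simp
    push_cast
    nlinarith [h1, hLlog]
  linarith [main]
end

section
/- Let G₀ be the disjoint union of α blocks, where each block consists of an edge (s,t) together with η−1 additional vertices each joined to both s and t, and let G_i (i = 1,…,α) be obtained from G₀ by deleting the (s,t) edge of the i-th block. Then in G_i the pair (s_i,t_i) is (2,η−1) connected, and D(f_{G₀}‖f_{G_i}) ≤ 2λ/(1 + cosh(2λ)^{η−1}) for the uniform-weight-λ Ising models. -/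
open Finset

noncomputable section

variable {V : Type*} [Fintype V] [DecidableEq V]

/-- G₀: disjoint union of α blocks; block j consists of s=(j,0), t=(j,1) joined by an edge,
and η−1 extra vertices (j,k), 2 ≤ k ≤ η, each joined to both s and t. -/
def blockGraph (α η : ℕ) : SimpleGraph (Fin α × Fin (η+1)) where
  Adj u v := u.1 = v.1 ∧ u.2 ≠ v.2 ∧ (u.2.val ≤ 1 ∨ v.2.val ≤ 1)
  symm := ⟨by
    rintro u v ⟨h1, h2, h3⟩
    exact ⟨h1.symm, h2.symm, h3.symm⟩⟩
  loopless := ⟨by rintro u ⟨_, h, _⟩; exact h rfl⟩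

/-- G_i: G₀ with the (s,t) edge of block i removed. -/
def blockGraphDel (α η : ℕ) (i : Fin α) : SimpleGraph (Fin α × Fin (η+1)) where
  Adj u v := (blockGraph α η).Adj u v ∧ ¬(u.1 = i ∧ u.2.val ≤ 1 ∧ v.2.val ≤ 1)
  symm := ⟨by
    rintro u v ⟨h, hn⟩
    refine ⟨h.symm, fun ⟨hv, hv2, hu2⟩ => hn ⟨h.1.trans hv, hu2, hv2⟩⟩⟩
  loopless := ⟨by rintro u ⟨h, _⟩; exact h.ne rfl⟩

instance (α η : ℕ) : DecidableRel (blockGraph α η).Adj := fun u v =>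
  decidable_of_iff (u.1 = v.1 ∧ u.2 ≠ v.2 ∧ (u.2.val ≤ 1 ∨ v.2.val ≤ 1)) Iff.rfl

instance (α η : ℕ) (i : Fin α) : DecidableRel (blockGraphDel α η i).Adj := fun u v =>
  decidable_of_iff ((blockGraph α η).Adj u v ∧ ¬(u.1 = i ∧ u.2.val ≤ 1 ∧ v.2.val ≤ 1)) Iff.rfl

/-!
Adding the edge `st` to an edge set `E` multiplies each Ising weight by `exp (λ σₛ σₜ)`, so
`D(f_{E + st} ‖ f_E) = λ 𝔼[σₛ σₜ] - log (p e^λ + q e^{-λ})`, where `p` and `q` are the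
probabilities under `f_E` that `σₛ = σₜ` and `σₛ ≠ σₜ`. As `𝔼[σₛ σₜ] ≤ 1` and, by convexity
of `exp`, `log (p e^λ + q e^{-λ}) ≥ λ (p - q)`, the divergence is at most `2 λ q`.

In `G_i` the `η - 1` middle vertices of block `i` are adjacent only to `s` and `t`. Summing
out their spins turns the weight into `cosh (λ (σₛ + σₜ)) ^ (η - 1)` times a weight not
involving block `i`; the first factor is `cosh (2λ) ^ (η - 1)` if `σₛ = σₜ` and `1` otherwise,
and flipping `σₜ` matches the two cases, so `p = cosh (2λ) ^ (η - 1) q`, i.e.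
`q = 1 / (1 + cosh (2λ) ^ (η - 1))`. The paths `s - m - t` through the middle vertices give
the `(2, η - 1)` connectivity.
-/

namespace Ising

open Real

lemma spin_mul_spin (a b : Bool) : spin a * spin b = if a = b then 1 else -1 := by
  cases a <;> cases b <;> simp [spin]

lemma cosh_mul_spin (c : ℝ) (b : Bool) : cosh (c * spin b) = cosh c := by
  cases b <;> simp [spin]

lemma cosh_mul_spin_add_spin (lam : ℝ) (a b : Bool) :
    cosh (lam * (spin a + spin b)) = if a = b then cosh (2 * lam) else 1 := by
  cases a <;> cases b <;> norm_num [spin] <;> ring_nf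

lemma dependsOn_energy {W : Type*} {E : Finset (Sym2 W)} {S : Set W}
    (hE : ∀ e ∈ E, ∀ v ∈ e, v ∈ S) : DependsOn (energy E) S := fun x y hxy =>
  Finset.sum_congr rfl fun e he => by
    induction e using Sym2.ind with
    | _ u v =>
      change spin (x u) * spin (x v) = spin (y u) * spin (y v)
      rw [hxy u (hE _ he u (Sym2.mem_mk_left u v)), hxy v (hE _ he v (Sym2.mem_mk_right u v))]

lemma partitionFn_pos (E : Finset (Sym2 V)) (lam : ℝ) : 0 < partitionFn E lam :=
  Finset.sum_pos (fun _ _ => exp_pos _) Finset.univ_nonempty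

lemma ising_nonneg (E : Finset (Sym2 V)) (lam : ℝ) (x : V → Bool) : 0 ≤ ising E lam x :=
  div_nonneg (exp_pos _).le (partitionFn_pos E lam).le

lemma sum_ising (E : Finset (Sym2 V)) (lam : ℝ) : ∑ x, ising E lam x = 1 := by
  simp only [ising, ← Finset.sum_div]
  exact div_self (partitionFn_pos E lam).ne'

lemma probAgree_add_probDisagree (E : Finset (Sym2 V)) (lam : ℝ) (a b : V) :
    probAgree E lam a b + probDisagree E lam a b = 1 := by
  rw [probAgree, probDisagree, ← Finset.sum_add_distrib, ← sum_ising E lam]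
  exact Finset.sum_congr rfl fun x _ => by by_cases h : x a = x b <;> simp [h]

lemma probAgree_nonneg (E : Finset (Sym2 V)) (lam : ℝ) (a b : V) : 0 ≤ probAgree E lam a b :=
  Finset.sum_nonneg fun x _ => by split_ifs <;> simp [ising_nonneg]

lemma probDisagree_nonneg (E : Finset (Sym2 V)) (lam : ℝ) (a b : V) :
    0 ≤ probDisagree E lam a b :=
  Finset.sum_nonneg fun x _ => by split_ifs <;> simp [ising_nonneg]

lemma corr_le_one (E : Finset (Sym2 V)) (lam : ℝ) (a b : V) : corr E lam a b ≤ 1 := by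
  rw [corr, ← sum_ising E lam]
  refine Finset.sum_le_sum fun x _ => mul_le_of_le_one_right (ising_nonneg E lam x) ?_
  rw [spin_mul_spin]
  split_ifs <;> norm_num

section InsertEdge

variable {E : Finset (Sym2 V)} {a b : V}

omit [Fintype V] in
lemma energy_insert (he : s(a, b) ∉ E) (x : V → Bool) :
    energy (insert s(a, b) E) x = spin (x a) * spin (x b) + energy E x :=
  Finset.sum_insert he

lemma partitionFn_insert (he : s(a, b) ∉ E) (lam : ℝ) :
    partitionFn (insert s(a, b) E) lam = partitionFn E lam *
      (exp lam * probAgree E lam a b + exp (-lam) * probDisagree E lam a b) := by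
  simp only [probAgree, probDisagree, ising, Finset.mul_sum, mul_add, ← Finset.sum_add_distrib]
  refine Finset.sum_congr rfl fun x _ => ?_
  have hZ := (partitionFn_pos E lam).ne'
  rw [energy_insert he, mul_add, exp_add, spin_mul_spin]
  by_cases h : x a = x b <;> simp [h] <;> field_simp

lemma KL_ising_insert (he : s(a, b) ∉ E) (lam : ℝ) :
    KL (ising (insert s(a, b) E) lam) (ising E lam) = lam * corr (insert s(a, b) E) lam a b
      + log (partitionFn E lam / partitionFn (insert s(a, b) E) lam) := by
  set E₀ := insert s(a, b) E
  have hlog : ∀ x, log (ising E₀ lam x / ising E lam x)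
      = lam * (spin (x a) * spin (x b)) + log (partitionFn E lam / partitionFn E₀ lam) := by
    intro x
    have h₀ := partitionFn_pos E₀ lam
    have h₁ := partitionFn_pos E lam
    have hratio : ising E₀ lam x / ising E lam x
        = exp (lam * (spin (x a) * spin (x b))) * (partitionFn E lam / partitionFn E₀ lam) := by
      rw [ising, ising, energy_insert he, mul_add, exp_add]
      field_simp
    rw [hratio, log_mul (exp_pos _).ne' (by positivity), log_exp]
  simp only [KL, hlog, mul_add, Finset.sum_add_distrib, ← Finset.sum_mul, sum_ising, one_mul]
  rw [corr, Finset.mul_sum]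
  congr 1
  exact Finset.sum_congr rfl fun x _ => by ring

theorem KL_ising_insert_le (he : s(a, b) ∉ E) {lam : ℝ} (hlam : 0 ≤ lam) :
    KL (ising (insert s(a, b) E) lam) (ising E lam) ≤ 2 * lam * probDisagree E lam a b := by
  set p := probAgree E lam a b
  set q := probDisagree E lam a b
  have hpq : p + q = 1 := probAgree_add_probDisagree E lam a b
  have hconvex : exp (p * lam + q * -lam) ≤ p * exp lam + q * exp (-lam) :=
    convexOn_exp.2 (Set.mem_univ _) (Set.mem_univ _) (probAgree_nonneg E lam a b)
      (probDisagree_nonneg E lam a b) hpq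
  have hlogZ : log (partitionFn E lam / partitionFn (insert s(a, b) E) lam)
      ≤ -(p * lam + q * -lam) := by
    rw [partitionFn_insert he, div_mul_cancel_left₀ (partitionFn_pos E lam).ne', log_inv,
      neg_le_neg_iff, ← log_exp (p * lam + q * -lam)]
    exact log_le_log (exp_pos _) (by linarith)
  have hcorr := mul_le_mul_of_nonneg_left (corr_le_one (insert s(a, b) E) lam a b) hlam
  rw [KL_ising_insert he]
  nlinarith

end InsertEdge

section Flip

variable {W : Type*} [DecidableEq W]

def flipAt (v : W) (x : W → Bool) : W → Bool := Function.update x v (!x v)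

@[simp] lemma flipAt_self (v : W) (x : W → Bool) : flipAt v x v = !x v := by
  simp [flipAt]

lemma flipAt_of_ne {v w : W} (h : w ≠ v) (x : W → Bool) : flipAt v x w = x w :=
  Function.update_of_ne h _ _

lemma flipAt_involutive (v : W) : Function.Involutive (flipAt v) := fun x => by
  ext w
  by_cases h : w = v
  · subst h; simp
  · simp [flipAt_of_ne h]

lemma _root_.DependsOn.apply_flipAt {β : Type*} {F : (W → Bool) → β} {v : W}
    (hF : DependsOn F {v}ᶜ) (x : W → Bool) : F (flipAt v x) = F x :=
  hF fun _ hw => flipAt_of_ne hw x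

variable [Fintype W]

lemma sum_comp_flipAt {M : Type*} [AddCommMonoid M] (v : W) (F : (W → Bool) → M) :
    ∑ x, F (flipAt v x) = ∑ x, F x :=
  Equiv.sum_comp (flipAt_involutive v).toPerm F

lemma sum_ite_eq_eq_sum_ite_ne {s t : W} (hst : s ≠ t) {F : (W → Bool) → ℝ}
    (hF : DependsOn F {t}ᶜ) :
    ∑ x, (if x s = x t then F x else 0) = ∑ x, (if x s ≠ x t then F x else 0) := by
  rw [← sum_comp_flipAt t]
  refine Finset.sum_congr rfl fun x _ => ?_
  rw [flipAt_of_ne hst, flipAt_self, hF.apply_flipAt]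
  cases x s <;> cases x t <;> simp

/-- Averaging over the flip at `v` turns `exp (c * σᵥ)` into `cosh c`. -/
lemma sum_mul_exp_mul_spin (v : W) {G c : (W → Bool) → ℝ} (hG : DependsOn G {v}ᶜ)
    (hc : DependsOn c {v}ᶜ) :
    ∑ x, G x * exp (c x * spin (x v)) = ∑ x, G x * cosh (c x) := by
  have hflip : ∑ x, G x * exp (c x * spin (x v)) = ∑ x, G x * exp (-(c x * spin (x v))) := by
    rw [← sum_comp_flipAt v]
    refine Finset.sum_congr rfl fun x _ => ?_
    rw [hG.apply_flipAt, hc.apply_flipAt, flipAt_self]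
    cases x v <;> simp [spin]
  have htwice : 2 * ∑ x, G x * exp (c x * spin (x v)) = 2 * ∑ x, G x * cosh (c x) := by
    conv_lhs => rw [two_mul]; enter [2]; rw [hflip]
    rw [← Finset.sum_add_distrib, Finset.mul_sum]
    refine Finset.sum_congr rfl fun x _ => ?_
    rw [← cosh_mul_spin (c x) (x v), cosh_eq]
    ring
  linarith

lemma sum_mul_prod_exp_mul_spin (M : Finset W) {G c : (W → Bool) → ℝ}
    (hG : DependsOn G (↑M)ᶜ) (hc : DependsOn c (↑M)ᶜ) :
    ∑ x, G x * ∏ m ∈ M, exp (c x * spin (x m)) = ∑ x, G x * cosh (c x) ^ M.card := by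
  induction M using Finset.induction_on generalizing G with
  | empty => simp
  | insert v M hv ih =>
    have hsub : (↑(insert v M) : Set W)ᶜ ⊆ (↑M)ᶜ := by simp
    have hprod : DependsOn (fun x => G x * ∏ m ∈ M, exp (c x * spin (x m))) {v}ᶜ := by
      intro x y hxy
      have hxy' : ∀ w ∈ (↑(insert v M) : Set W)ᶜ, x w = y w := fun w hw => hxy w (by aesop)
      dsimp only
      rw [hG hxy', hc hxy']
      exact congrArg _ (Finset.prod_congr rfl fun m hm =>
        by rw [hxy m (by rintro rfl; exact hv hm)])
    calc ∑ x, G x * ∏ m ∈ insert v M, exp (c x * spin (x m))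
        = ∑ x, (G x * ∏ m ∈ M, exp (c x * spin (x m))) * exp (c x * spin (x v)) := by
          simp only [Finset.prod_insert hv, mul_comm, mul_left_comm]
      _ = ∑ x, G x * cosh (c x) * ∏ m ∈ M, exp (c x * spin (x m)) := by
          rw [sum_mul_exp_mul_spin v hprod (hc.mono (by simp))]
          simp only [mul_right_comm]
      _ = ∑ x, G x * cosh (c x) ^ (insert v M).card := by
          rw [ih (fun x y hxy => by rw [hG.mono hsub hxy, hc.mono hsub hxy]) (hc.mono hsub),
            Finset.card_insert_of_notMem hv]
          simp only [pow_succ, mul_assoc, mul_comm (cosh _)]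

end Flip

theorem ldConnected_two_of_forall_adj {W : Type*} {G : SimpleGraph W} {a b : W} {d : ℕ}
    (hab : a ≠ b) (m : Fin d → W) (hm : Function.Injective m) (ha : ∀ k, G.Adj a (m k))
    (hb : ∀ k, G.Adj (m k) b) : LDConnected G 2 d a b := by
  refine ⟨fun k => .cons (ha k) (.cons (hb k) .nil), fun k => ⟨?_, by simp⟩,
    fun j k hjk v hvj hvk => ?_⟩
  · rw [SimpleGraph.Walk.isPath_def]
    simp [hab, G.ne_of_adj (ha k), G.ne_of_adj (hb k)]
  · simp only [SimpleGraph.Walk.support_cons, SimpleGraph.Walk.support_nil, List.mem_cons,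
      List.not_mem_nil, or_false] at hvj hvk
    rcases hvj with rfl | rfl | rfl
    · exact Or.inl rfl
    · rcases hvk with h | h | h
      · exact Or.inl h
      · exact absurd (hm h) hjk
      · exact Or.inr h
    · exact Or.inr rfl

section Block

variable {α : ℕ} (n : ℕ) (i : Fin α)

def middle : Finset (Fin α × Fin (n + 2)) := {i} ×ˢ Finset.Ioi 1

def innerEdges : Finset (Sym2 (Fin α × Fin (n + 2))) :=
  (middle n i ×ˢ {(i, 0), (i, 1)}).image fun p => s(p.2, p.1)

def outerEdges : Finset (Sym2 (Fin α × Fin (n + 2))) :=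
  (blockGraphDel α (n + 1) i).edgeFinset \ innerEdges n i

lemma card_middle : (middle n i).card = n := by
  simp [middle]

lemma mem_middle {v : Fin α × Fin (n + 2)} : v ∈ middle n i ↔ v.1 = i ∧ 1 < v.2.val := by
  simp only [middle, Finset.mem_product, Finset.mem_singleton, Finset.mem_Ioi, Fin.lt_def,
    Fin.val_one]

theorem ldConnected_blockGraphDel : LDConnected (blockGraphDel α (n + 1) i) 2 n (i, 0) (i, 1) := by
  refine ldConnected_two_of_forall_adj (by simp) (fun k => (i, k.addNat 2)) ?_ (fun k => ?_)
    (fun k => ?_)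
  · intro j k h
    simpa [Fin.ext_iff] using h
  all_goals
    simp only [blockGraphDel, blockGraph, Fin.ext_iff, Fin.val_zero, Fin.val_one, Fin.val_addNat,
      ne_eq, true_and]
    omega

lemma edgeFinset_blockGraph :
    (blockGraph α (n + 1)).edgeFinset
      = insert s((i, 0), (i, 1)) (blockGraphDel α (n + 1) i).edgeFinset := by
  ext e
  induction e using Sym2.ind with
  | _ u v =>
    simp only [Finset.mem_insert, SimpleGraph.mem_edgeFinset, SimpleGraph.mem_edgeSet, Sym2.eq_iff]
    simp only [blockGraphDel, blockGraph, Prod.ext_iff, Fin.ext_iff, Fin.val_zero, Fin.val_one,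
      ne_eq]
    omega

lemma st_notMem_edgeFinset_blockGraphDel :
    s(((i, 0) : Fin α × Fin (n + 2)), (i, 1)) ∉ (blockGraphDel α (n + 1) i).edgeFinset := by
  rw [SimpleGraph.mem_edgeFinset, SimpleGraph.mem_edgeSet]
  simp [blockGraphDel]

lemma innerEdges_subset : innerEdges n i ⊆ (blockGraphDel α (n + 1) i).edgeFinset := by
  intro e he
  obtain ⟨⟨m, w⟩, hmw, rfl⟩ := Finset.mem_image.1 he
  rw [SimpleGraph.mem_edgeFinset, SimpleGraph.mem_edgeSet]
  simp only [Finset.mem_product, mem_middle, Finset.mem_insert, Finset.mem_singleton] at hmw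
  simp only [blockGraphDel, blockGraph, Prod.ext_iff, Fin.ext_iff] at hmw ⊢
  simp only [Fin.val_zero, Fin.val_one] at hmw
  omega

lemma mk_mem_innerEdges {w m : Fin α × Fin (n + 2)} (hw : w.1 = i) (hw' : w.2.val ≤ 1)
    (hm : m ∈ middle n i) : s(w, m) ∈ innerEdges n i := by
  refine Finset.mem_image.2 ⟨(m, w), Finset.mem_product.2 ⟨hm, ?_⟩, rfl⟩
  simp only [Finset.mem_insert, Finset.mem_singleton, Prod.ext_iff, Fin.ext_iff, Fin.val_zero,
    Fin.val_one]
  omega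

lemma fst_ne_of_mem_outerEdges {e : Sym2 (Fin α × Fin (n + 2))} (he : e ∈ outerEdges n i) :
    ∀ v ∈ e, v.1 ≠ i := by
  obtain ⟨he, he'⟩ := Finset.mem_sdiff.1 he
  induction e using Sym2.ind with
  | _ u v =>
    rw [SimpleGraph.mem_edgeFinset, SimpleGraph.mem_edgeSet] at he
    obtain ⟨⟨hblock, -, hsmall⟩, hnot_st⟩ := he
    intro w hw hwi
    have hu : u.1 = i := by rcases Sym2.mem_iff.1 hw with rfl | rfl; exacts [hwi, hblock.trans hwi]
    have hv : v.1 = i := hblock ▸ hu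
    rcases Nat.lt_or_ge 1 v.2.val with h | h
    · exact he' (mk_mem_innerEdges n i hu (by omega) ((mem_middle n i).2 ⟨hv, h⟩))
    · rw [Sym2.eq_swap] at he'
      exact he' (mk_mem_innerEdges n i hv h ((mem_middle n i).2 ⟨hu, by omega⟩))

lemma energy_innerEdges (x : Fin α × Fin (n + 2) → Bool) :
    energy (innerEdges n i) x
      = ∑ m ∈ middle n i, (spin (x (i, 0)) + spin (x (i, 1))) * spin (x m) := by
  have hinj : Set.InjOn (fun p : (Fin α × Fin (n + 2)) × (Fin α × Fin (n + 2)) => s(p.2, p.1))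
      ↑(middle n i ×ˢ ({(i, 0), (i, 1)} : Finset (Fin α × Fin (n + 2)))) := by
    rintro ⟨m, w⟩ hmw ⟨m', w'⟩ hmw' h
    simp only [Finset.coe_product, Set.mem_prod, Finset.mem_coe, mem_middle, Finset.mem_insert,
      Finset.mem_singleton] at hmw hmw'
    simp only [Sym2.eq_iff, Prod.ext_iff, Fin.ext_iff, Fin.val_zero, Fin.val_one] at h hmw hmw' ⊢
    omega
  have hst : ((i, 0) : Fin α × Fin (n + 2)) ≠ (i, 1) := by simp
  rw [energy, innerEdges, Finset.sum_image hinj, Finset.sum_product]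
  refine Finset.sum_congr rfl fun m _ => ?_
  rw [Finset.sum_pair hst, add_mul]
  rfl

lemma energy_blockGraphDel (x : Fin α × Fin (n + 2) → Bool) :
    energy (blockGraphDel α (n + 1) i).edgeFinset x = energy (outerEdges n i) x
      + ∑ m ∈ middle n i, (spin (x (i, 0)) + spin (x (i, 1))) * spin (x m) := by
  rw [← energy_innerEdges, energy, energy, energy, outerEdges,
    Finset.sum_sdiff (innerEdges_subset n i)]

variable (lam : ℝ)

def outerWeight (x : Fin α × Fin (n + 2) → Bool) : ℝ :=
  exp (lam * energy (outerEdges n i) x) / partitionFn (blockGraphDel α (n + 1) i).edgeFinset lam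

lemma dependsOn_outerWeight : DependsOn (outerWeight n i lam) {v | v.1 ≠ i} := fun x y hxy => by
  rw [outerWeight, outerWeight, dependsOn_energy (fun _ => fst_ne_of_mem_outerEdges n i) hxy]

lemma ising_blockGraphDel (x : Fin α × Fin (n + 2) → Bool) :
    ising (blockGraphDel α (n + 1) i).edgeFinset lam x = outerWeight n i lam x
      * ∏ m ∈ middle n i, exp (lam * (spin (x (i, 0)) + spin (x (i, 1))) * spin (x m)) := by
  rw [ising, energy_blockGraphDel, mul_add, exp_add, Finset.mul_sum, exp_sum]
  simp only [outerWeight, mul_assoc, div_mul_eq_mul_div]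

lemma sum_ite_ising_blockGraphDel (P : Bool → Bool → Prop) [DecidableRel P] :
    ∑ x, (if P (x (i, 0)) (x (i, 1)) then ising (blockGraphDel α (n + 1) i).edgeFinset lam x
      else 0)
      = ∑ x, if P (x (i, 0)) (x (i, 1)) then
          outerWeight n i lam x * cosh (lam * (spin (x (i, 0)) + spin (x (i, 1)))) ^ n
        else 0 := by
  have hs : ((i, 0) : Fin α × Fin (n + 2)) ∉ middle n i := by simp [mem_middle]
  have ht : ((i, 1) : Fin α × Fin (n + 2)) ∉ middle n i := by simp [mem_middle]
  have hG : DependsOn (fun x => if P (x (i, 0)) (x (i, 1)) then outerWeight n i lam x else 0)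
      (↑(middle n i))ᶜ := fun x y hxy => by
    simp only [hxy _ hs, hxy _ ht,
      dependsOn_outerWeight n i lam fun v hv => hxy v fun hm => hv ((mem_middle n i).1 hm).1]
  have hc : DependsOn (fun x : Fin α × Fin (n + 2) → Bool => lam * (spin (x (i, 0))
      + spin (x (i, 1)))) (↑(middle n i))ᶜ :=
    fun x y hxy => by simp only [hxy _ hs, hxy _ ht]
  simp only [ising_blockGraphDel, ← ite_zero_mul]
  rw [sum_mul_prod_exp_mul_spin (middle n i) hG hc, card_middle]

theorem probAgree_blockGraphDel :
    probAgree (blockGraphDel α (n + 1) i).edgeFinset lam (i, 0) (i, 1) = cosh (2 * lam) ^ n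
      * probDisagree (blockGraphDel α (n + 1) i).edgeFinset lam (i, 0) (i, 1) := by
  have hst : ((i, 0) : Fin α × Fin (n + 2)) ≠ (i, 1) := by simp
  have hw : DependsOn (outerWeight n i lam) {(i, 1)}ᶜ :=
    (dependsOn_outerWeight n i lam).mono (by rintro v hv rfl; exact hv rfl)
  rw [probAgree, probDisagree, sum_ite_ising_blockGraphDel n i lam (· = ·),
    sum_ite_ising_blockGraphDel n i lam (· ≠ ·)]
  simp only [cosh_mul_spin_add_spin]
  calc ∑ x, (if x (i, 0) = x (i, 1) then outerWeight n i lam x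
          * (if x (i, 0) = x (i, 1) then cosh (2 * lam) else 1) ^ n else 0)
      = cosh (2 * lam) ^ n
          * ∑ x, (if x (i, 0) = x (i, 1) then outerWeight n i lam x else 0) := by
        rw [Finset.mul_sum]
        exact Finset.sum_congr rfl fun x _ => by split_ifs <;> simp [mul_comm]
    _ = cosh (2 * lam) ^ n
          * ∑ x, (if x (i, 0) ≠ x (i, 1) then outerWeight n i lam x else 0) := by
        rw [sum_ite_eq_eq_sum_ite_ne hst hw]
    _ = _ := by
        congr 1
        exact Finset.sum_congr rfl fun x _ => by split_ifs <;> simp_all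

theorem probDisagree_blockGraphDel :
    probDisagree (blockGraphDel α (n + 1) i).edgeFinset lam (i, 0) (i, 1)
      = 1 / (1 + cosh (2 * lam) ^ n) := by
  have h := probAgree_add_probDisagree (blockGraphDel α (n + 1) i).edgeFinset lam (i, 0) (i, 1)
  rw [probAgree_blockGraphDel] at h
  have : 0 < 1 + cosh (2 * lam) ^ n := by positivity
  field_simp
  linarith

end Block

end Ising

theorem stmt_13_general (α η : ℕ) (hη : 1 ≤ η) (i : Fin α)
    (lam : ℝ) (hlam : 0 < lam) :
    LDConnected (blockGraphDel α η i) 2 (η - 1) (i, (0 : Fin (η+1))) (i, (1 : Fin (η+1))) ∧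
    KL (ising (blockGraph α η).edgeFinset lam) (ising (blockGraphDel α η i).edgeFinset lam)
      ≤ 2 * lam / (1 + Real.cosh (2*lam) ^ (η - 1)) := by
  obtain ⟨n, rfl⟩ := Nat.exists_eq_add_of_le' hη
  rw [Nat.add_sub_cancel]
  refine ⟨Ising.ldConnected_blockGraphDel n i, ?_⟩
  calc KL (ising (blockGraph α (n + 1)).edgeFinset lam)
        (ising (blockGraphDel α (n + 1) i).edgeFinset lam)
      ≤ 2 * lam * probDisagree (blockGraphDel α (n + 1) i).edgeFinset lam (i, 0) (i, 1) := by
        rw [Ising.edgeFinset_blockGraph n i]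
        exact Ising.KL_ising_insert_le (Ising.st_notMem_edgeFinset_blockGraphDel n i) hlam.le
    _ = 2 * lam / (1 + Real.cosh (2 * lam) ^ n) := by
        rw [Ising.probDisagree_blockGraphDel]
        ring

/-- In G_i the pair (s_i,t_i) is (2,η−1) connected, and
D(f_{G₀}‖f_{G_i}) ≤ 2λ/(1 + cosh(2λ)^{η−1}). -/
theorem stmt_13 (α η : ℕ) (hα : 1 ≤ α) (hη : 1 ≤ η) (i : Fin α)
    (lam : ℝ) (hlam : 0 < lam) :
    LDConnected (blockGraphDel α η i) 2 (η - 1) (i, (0 : Fin (η+1))) (i, (1 : Fin (η+1))) ∧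
    KL (ising (blockGraph α η).edgeFinset lam) (ising (blockGraphDel α η i).edgeFinset lam)
      ≤ 2 * lam / (1 + Real.cosh (2*lam) ^ (η - 1)) :=
  stmt_13_general α η hη i lam hlam
end
end
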